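/- arXiv:1603.07682 — 8 statements merged into one kernel-verified Lean document; each statement's English description precedes it below -/
import Mathlib

section
/- Fix a probability space, a random value v, an inspection cost c ≥ 0, and strike price σ defined by E[(v - σ)^+] = c. Let A and I be {0,1}-valued random variables (allocation and inspection indicators) with A ≤ I pointwise, and suppose v is independent of I. Let κ = min{σ, v} be the covered call value. Then E[A·v - I·c] ≤ E[A·κ], with equality if and only if P(I = 1, A = 0, v > σ) = 0 (i.e., the policy always 'exercises in the money'). -/
/-! With `m = (v - σ)⁺` one has `v = min σ v + m`, and since `m` is a function of `v`, hence
independent of `I`, with `E[m] = c`, the inspection cost satisfies `E[I·c] = E[I·m]`. Therefore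
`E[A·v - I·c] = E[A·κ] - E[(I - A)·m]`. The last term is nonnegative because `A ≤ I`, and it vanishes
exactly when `(I - A)·m = 0` almost surely, i.e. when almost surely no inspected bidder with
`v > σ` is left without the item. -/

open MeasureTheory ProbabilityTheory

theorem min_add_max_sub_zero (σ x : ℝ) : min σ x + max (x - σ) 0 = x := by
  rw [← sub_self σ, max_sub_sub_right]
  linarith [min_add_max σ x, max_comm x σ]

theorem sub_mul_max_sub_ne_zero_iff {a i σ x : ℝ} (ha : a = 0 ∨ a = 1) (hi : i = 0 ∨ i = 1)
    (hai : a ≤ i) : (i - a) * max (x - σ) 0 ≠ 0 ↔ i = 1 ∧ a = 0 ∧ σ < x := by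
  have hpos : max (x - σ) 0 ≠ 0 ↔ σ < x := by
    rw [ne_eq, max_eq_right_iff, sub_nonpos, not_le]
  rw [mul_ne_zero_iff, hpos, sub_ne_zero]
  rcases ha with rfl | rfl <;> rcases hi with rfl | rfl <;> norm_num at *

namespace MeasureTheory

variable {Ω : Type*} [MeasurableSpace Ω] {μ : Measure Ω}

theorem Integrable.zero_one_mul {a f : Ω → ℝ} (hf : Integrable f μ)
    (ha : AEStronglyMeasurable a μ) (ha01 : ∀ ω, a ω = 0 ∨ a ω = 1) :
    Integrable (fun ω => a ω * f ω) μ :=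
  hf.bdd_mul ha (c := 1) <| .of_forall fun ω => by rcases ha01 ω with h | h <;> simp [h]

end MeasureTheory

theorem integral_mul_sub_mul_eq_integral_mul_min_sub
    {Ω : Type*} [MeasurableSpace Ω] {μ : Measure Ω} [IsProbabilityMeasure μ] {v A I : Ω → ℝ}
    (hv : Integrable v μ) (hA : AEStronglyMeasurable A μ) (hI : AEStronglyMeasurable I μ)
    (hA01 : ∀ ω, A ω = 0 ∨ A ω = 1) (hI01 : ∀ ω, I ω = 0 ∨ I ω = 1)
    (hindep : IndepFun v I μ) {c σ : ℝ} (hσ : ∫ ω, max (v ω - σ) 0 ∂μ = c) :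
    ∫ ω, (A ω * v ω - I ω * c) ∂μ =
      ∫ ω, A ω * min σ (v ω) ∂μ - ∫ ω, (I ω - A ω) * max (v ω - σ) 0 ∂μ := by
  set m : Ω → ℝ := fun ω => max (v ω - σ) 0
  have hm : Integrable m μ := (hv.sub (integrable_const σ)).pos_part
  have hκ : Integrable (fun ω => min σ (v ω)) μ := (integrable_const σ).inf hv
  have hI_int : Integrable I μ := by
    simpa using (integrable_const (1 : ℝ)).zero_one_mul hI hI01
  have hIc : ∫ ω, I ω * c ∂μ = ∫ ω, I ω * m ω ∂μ := by
    have hindep' : IndepFun I m μ :=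
      hindep.symm.comp measurable_id ((measurable_id.sub_const σ).max measurable_const)
    rw [hindep'.integral_fun_mul_eq_mul_integral hI hm.aestronglyMeasurable,
      integral_mul_const, hσ]
  have hAv : ∫ ω, A ω * v ω ∂μ = ∫ ω, A ω * min σ (v ω) ∂μ + ∫ ω, A ω * m ω ∂μ := by
    rw [← integral_add (hκ.zero_one_mul hA hA01) (hm.zero_one_mul hA hA01)]
    simp_rw [← mul_add, m, min_add_max_sub_zero]
  have hIAm : ∫ ω, (I ω - A ω) * m ω ∂μ = ∫ ω, I ω * m ω ∂μ - ∫ ω, A ω * m ω ∂μ := by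
    simp_rw [sub_mul]
    exact integral_sub (hm.zero_one_mul hI hI01) (hm.zero_one_mul hA hA01)
  rw [integral_sub (hv.zero_one_mul hA hA01) (hI_int.mul_const c), hIc, hAv, hIAm]
  ring

theorem covered_call_amortization_general
    {Ω : Type*} [MeasurableSpace Ω] (μ : Measure Ω) [IsProbabilityMeasure μ]
    (v A I : Ω → ℝ) (hv : Integrable v μ)
    (hA : Measurable A) (hI : Measurable I)
    (hA01 : ∀ ω, A ω = 0 ∨ A ω = 1) (hI01 : ∀ ω, I ω = 0 ∨ I ω = 1)
    (hAI : ∀ ω, A ω ≤ I ω)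
    (hindep : IndepFun v I μ)
    (c σ : ℝ)
    (hσ : ∫ ω, max (v ω - σ) 0 ∂μ = c) :
    (∫ ω, (A ω * v ω - I ω * c) ∂μ) ≤ (∫ ω, A ω * min σ (v ω) ∂μ) ∧
    ((∫ ω, (A ω * v ω - I ω * c) ∂μ) = (∫ ω, A ω * min σ (v ω) ∂μ) ↔
      μ {ω | I ω = 1 ∧ A ω = 0 ∧ σ < v ω} = 0) := by
  set gap : Ω → ℝ := fun ω => (I ω - A ω) * max (v ω - σ) 0
  have hgap_nonneg : 0 ≤ gap := fun ω => mul_nonneg (sub_nonneg.2 (hAI ω)) (le_max_right _ _)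
  have hgap : Integrable gap μ := by
    have hm : Integrable (fun ω => max (v ω - σ) 0) μ := (hv.sub (integrable_const σ)).pos_part
    simp_rw [gap, sub_mul]
    exact (hm.zero_one_mul hI.aestronglyMeasurable hI01).sub
      (hm.zero_one_mul hA.aestronglyMeasurable hA01)
  rw [integral_mul_sub_mul_eq_integral_mul_min_sub hv hA.aestronglyMeasurable
    hI.aestronglyMeasurable hA01 hI01 hindep hσ]
  refine ⟨sub_le_self _ (integral_nonneg hgap_nonneg), ?_⟩
  rw [sub_eq_self, integral_eq_zero_iff_of_nonneg hgap_nonneg hgap, Filter.EventuallyEq, ae_iff]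
  simp only [Pi.zero_apply, gap, sub_mul_max_sub_ne_zero_iff (hA01 _) (hI01 _) (hAI _)]

/-- Amortization lemma: for an inspection indicator `I` and allocation indicator `A ≤ I`,
with `v` independent of `I` and strike price `σ` satisfying `E[(v-σ)⁺] = c`, the net value
`E[A·v - I·c]` is at most the expected covered call value `E[A·min(σ,v)]`, with equality
iff the policy always exercises in the money. -/
theorem covered_call_amortization
    {Ω : Type*} [MeasurableSpace Ω] (μ : Measure Ω) [IsProbabilityMeasure μ]
    (v A I : Ω → ℝ) (hv : Integrable v μ) (hvm : Measurable v)
    (hA : Measurable A) (hI : Measurable I)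
    (hA01 : ∀ ω, A ω = 0 ∨ A ω = 1) (hI01 : ∀ ω, I ω = 0 ∨ I ω = 1)
    (hAI : ∀ ω, A ω ≤ I ω)
    (hindep : IndepFun v I μ)
    (c σ : ℝ) (hc : 0 ≤ c)
    (hσ : ∫ ω, max (v ω - σ) 0 ∂μ = c) :
    (∫ ω, (A ω * v ω - I ω * c) ∂μ) ≤ (∫ ω, A ω * min σ (v ω) ∂μ) ∧
    ((∫ ω, (A ω * v ω - I ω * c) ∂μ) = (∫ ω, A ω * min σ (v ω) ∂μ) ↔
      μ {ω | I ω = 1 ∧ A ω = 0 ∧ σ < v ω} = 0) :=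
  covered_call_amortization_general μ v A I hv hA hI hA01 hI01 hAI hindep c σ hσ
end

section
/- In the setting of n bidders with covered call values κ_1, ..., κ_n, any procedure that (a) always exercises in the money for every bidder (E[A_i v_i - I_i c_i] = E[A_i κ_i] for all i), and (b) always allocates the item to a bidder attaining max_i κ_i whenever that maximum is nonnegative, achieves expected welfare equal to E[max_i κ_i^+], hence is first-best optimal. -/
/-!
By the amortization identity (a), each bidder's expected contribution `E[A_i v_i - I_i c_i]`
equals `E[A_i κ_i]`. At most one bidder is allocated; by (b) it is a maximiser of `κ` when
`max_i κ_i ≥ 0`, and nobody is allocated otherwise, so `Σ_i A_i κ_i = (max_i κ_i)⁺` pointwise.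
-/

open MeasureTheory Finset

theorem MeasureTheory.Integrable.zero_or_one_mul {α : Type*} [MeasurableSpace α]
    {μ : Measure α} {f g : α → ℝ} (hg : Integrable g μ) (hf : AEStronglyMeasurable f μ)
    (hf01 : ∀ x, f x = 0 ∨ f x = 1) : Integrable (fun x => f x * g x) μ :=
  hg.bdd_mul (c := 1) hf (ae_of_all _ fun x => by rcases hf01 x with h | h <;> simp [h])

theorem MeasureTheory.integral_finsetSum_congr {α ι : Type*} [MeasurableSpace α]
    {μ : Measure α} (s : Finset ι) {f g : ι → α → ℝ}
    (hf : ∀ i ∈ s, Integrable (f i) μ) (hg : ∀ i ∈ s, Integrable (g i) μ)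
    (h : ∀ i ∈ s, ∫ x, f i x ∂μ = ∫ x, g i x ∂μ) :
    ∫ x, ∑ i ∈ s, f i x ∂μ = ∫ x, ∑ i ∈ s, g i x ∂μ := by
  rw [integral_finsetSum s hf, integral_finsetSum s hg]
  exact sum_congr rfl h

section Allocation

variable {ι : Type*} [Fintype ι] {a k : ι → ℝ}

theorem sum_mul_eq_of_eq_one (ha : ∀ j, 0 ≤ a j) (hsum : ∑ j, a j ≤ 1) {i : ι}
    (hi : a i = 1) : ∑ j, a j * k j = k i := by
  classical
  have hrest : ∀ j ∈ univ.erase i, a j = 0 := by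
    have hle : ∑ j ∈ univ.erase i, a j ≤ 0 := by
      rw [← add_sum_erase univ a (mem_univ i), hi] at hsum
      linarith
    exact (sum_eq_zero_iff_of_nonneg fun j _ => ha j).1
      (le_antisymm hle (sum_nonneg fun j _ => ha j))
  rw [← add_sum_erase univ _ (mem_univ i), hi, one_mul,
    sum_eq_zero fun j hj => by rw [hrest j hj, zero_mul], add_zero]

theorem sum_mul_eq_max_sup'_zero [Nonempty ι] (ha : ∀ j, 0 ≤ a j) (hsum : ∑ j, a j ≤ 1)
    (hpos : 0 ≤ univ.sup' univ_nonempty k → ∃ i, a i = 1 ∧ k i = univ.sup' univ_nonempty k)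
    (hneg : univ.sup' univ_nonempty k < 0 → ∀ i, a i = 0) :
    ∑ i, a i * k i = max (univ.sup' univ_nonempty k) 0 := by
  rcases lt_or_ge (univ.sup' univ_nonempty k) 0 with hlt | hge
  · rw [max_eq_right hlt.le]
    exact sum_eq_zero fun i _ => by rw [hneg hlt i, zero_mul]
  · obtain ⟨i, hi, hki⟩ := hpos hge
    rw [max_eq_left hge, sum_mul_eq_of_eq_one ha hsum hi, hki]

end Allocation

theorem first_best_welfare_general
    {Ω : Type*} [MeasurableSpace Ω] (μ : Measure Ω) [IsProbabilityMeasure μ]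
    (n : ℕ) [NeZero n]
    (v : Fin n → Ω → ℝ) (A I : Fin n → Ω → ℝ) (c σ : Fin n → ℝ)
    (hv : ∀ i, Integrable (v i) μ)
    (hA : ∀ i, Measurable (A i)) (hI : ∀ i, Measurable (I i))
    (hA01 : ∀ i ω, A i ω = 0 ∨ A i ω = 1) (hI01 : ∀ i ω, I i ω = 0 ∨ I i ω = 1)
    (hsum : ∀ ω, ∑ i, A i ω ≤ 1)
    (ha : ∀ i, (∫ ω, (A i ω * v i ω - I i ω * c i) ∂μ) =
               ∫ ω, A i ω * min (σ i) (v i ω) ∂μ)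
    (hb : ∀ ω, 0 ≤ Finset.univ.sup' Finset.univ_nonempty (fun j => min (σ j) (v j ω)) →
          ∃ i, A i ω = 1 ∧
            min (σ i) (v i ω) =
              Finset.univ.sup' Finset.univ_nonempty (fun j => min (σ j) (v j ω)))
    (hb' : ∀ ω, Finset.univ.sup' Finset.univ_nonempty (fun j => min (σ j) (v j ω)) < 0 →
          ∀ i, A i ω = 0) :
    (∫ ω, ∑ i, (A i ω * v i ω - I i ω * c i) ∂μ) =
      ∫ ω, max (Finset.univ.sup' Finset.univ_nonempty (fun j => min (σ j) (v j ω))) 0 ∂μ := by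
  have hA_nonneg : ∀ i ω, 0 ≤ A i ω := fun i ω => by rcases hA01 i ω with h | h <;> simp [h]
  have hpayoff : ∀ i, Integrable (fun ω => A i ω * v i ω - I i ω * c i) μ := fun i =>
    ((hv i).zero_or_one_mul (hA i).aestronglyMeasurable (hA01 i)).sub
      ((integrable_const (c i)).zero_or_one_mul (hI i).aestronglyMeasurable (hI01 i))
  have hcall : ∀ i, Integrable (fun ω => A i ω * min (σ i) (v i ω)) μ := fun i =>
    ((integrable_const (σ i)).inf (hv i)).zero_or_one_mul (hA i).aestronglyMeasurable (hA01 i)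
  calc (∫ ω, ∑ i, (A i ω * v i ω - I i ω * c i) ∂μ)
      = ∫ ω, ∑ i, A i ω * min (σ i) (v i ω) ∂μ :=
        integral_finsetSum_congr univ (fun i _ => hpayoff i) (fun i _ => hcall i)
          (fun i _ => ha i)
    _ = _ := integral_congr_ae <| ae_of_all _ fun ω =>
        sum_mul_eq_max_sup'_zero (fun i => hA_nonneg i ω) (hsum ω) (hb ω) (hb' ω)

/-- First-best characterization: a procedure that (a) always exercises in the money for
every bidder (so `E[A_i v_i - I_i c_i] = E[A_i κ_i]`) and (b) allocates to a bidder
attaining the maximum covered call value whenever it is nonnegative (and does not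
allocate otherwise) achieves expected welfare `E[(max_i κ_i)⁺]`. -/
theorem first_best_welfare
    {Ω : Type*} [MeasurableSpace Ω] (μ : Measure Ω) [IsProbabilityMeasure μ]
    (n : ℕ) [NeZero n]
    (v : Fin n → Ω → ℝ) (A I : Fin n → Ω → ℝ) (c σ : Fin n → ℝ)
    (hv : ∀ i, Integrable (v i) μ) (hvm : ∀ i, Measurable (v i))
    (hA : ∀ i, Measurable (A i)) (hI : ∀ i, Measurable (I i))
    (hA01 : ∀ i ω, A i ω = 0 ∨ A i ω = 1) (hI01 : ∀ i ω, I i ω = 0 ∨ I i ω = 1)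
    (hAI : ∀ i ω, A i ω ≤ I i ω)
    (hsum : ∀ ω, ∑ i, A i ω ≤ 1)
    (ha : ∀ i, (∫ ω, (A i ω * v i ω - I i ω * c i) ∂μ) =
               ∫ ω, A i ω * min (σ i) (v i ω) ∂μ)
    (hb : ∀ ω, 0 ≤ Finset.univ.sup' Finset.univ_nonempty (fun j => min (σ j) (v j ω)) →
          ∃ i, A i ω = 1 ∧
            min (σ i) (v i ω) =
              Finset.univ.sup' Finset.univ_nonempty (fun j => min (σ j) (v j ω)))
    (hb' : ∀ ω, Finset.univ.sup' Finset.univ_nonempty (fun j => min (σ j) (v j ω)) < 0 →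
          ∀ i, A i ω = 0) :
    (∫ ω, ∑ i, (A i ω * v i ω - I i ω * c i) ∂μ) =
      ∫ ω, max (Finset.univ.sup' Finset.univ_nonempty (fun j => min (σ j) (v j ω))) 0 ∂μ :=
  first_best_welfare_general μ n v A I c σ hv hA hI hA01 hI01 hsum ha hb hb'
end

section
/- Let X_1, ..., X_n be independent nonnegative real random variables such that the distribution of X* = max_i X_i has no point masses, and let π be the median of X*. Define Z to be X_i for the smallest index i with X_i > π, and Z = 0 if no such index exists. Then E[Z] ≥ (1/2)·E[X*]. -/
/-!
Write `M = maxᵢ Xᵢ`, `Yᵢ = (Xᵢ - π)⁺` and `Bᵢ = {Xⱼ ≤ π for all j < i}`. The reward of stopping at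
the first `Xᵢ > π` is `π · 1{M > π} + Σᵢ 1_{Bᵢ} Yᵢ`, a sum with at most one nonzero term. As `Bᵢ`
depends only on the `Xⱼ` with `j < i`, independence gives `E[Z] = π/2 + Σᵢ P(Bᵢ) E[Yᵢ]`, and
`P(Bᵢ) ≥ P(M ≤ π) = 1/2`. Finally `Σᵢ Yᵢ ≥ (M - π)⁺ ≥ M - π`, so the sum is at least `(E[M] - π)/2`.
-/

open MeasureTheory ProbabilityTheory Finset

theorem Finset.max_sup'_sub_le_sum {ι : Type*} {s : Finset ι} (hs : s.Nonempty) (x : ι → ℝ)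
    (t : ℝ) : max (s.sup' hs x - t) 0 ≤ ∑ i ∈ s, max (x i - t) 0 := by
  obtain ⟨i, hi, hmax⟩ := exists_mem_eq_sup' hs x
  rw [hmax]
  exact single_le_sum (f := fun i => max (x i - t) 0) (fun j _ => le_max_right _ _) hi

section Deterministic

variable {ι : Type*} [Fintype ι] [LinearOrder ι]

open Classical in
noncomputable def firstExceedingValue (t : ℝ) (x : ι → ℝ) : ℝ :=
  if h : (univ.filter fun i => t < x i).Nonempty then x ((univ.filter fun i => t < x i).min' h)
  else 0

theorem firstExceedingValue_eq [Nonempty ι] (t : ℝ) (x : ι → ℝ) :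
    firstExceedingValue t x = (if t < univ.sup' univ_nonempty x then t else 0) +
      ∑ i, if ∀ j < i, x j ≤ t then max (x i - t) 0 else 0 := by
  classical
  have max_eq_zero : ∀ {i}, x i ≤ t → max (x i - t) 0 = 0 := fun h => max_eq_right (by linarith)
  unfold firstExceedingValue
  by_cases h : (univ.filter fun i => t < x i).Nonempty
  · set i₀ := (univ.filter fun i => t < x i).min' h
    have hi₀ : t < x i₀ := (mem_filter.1 (min'_mem _ h)).2
    have hfirst : ∀ j < i₀, x j ≤ t := fun j hj =>
      not_lt.1 fun hjt => (min'_le _ j (mem_filter.2 ⟨mem_univ j, hjt⟩)).not_gt hj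
    have hsup : t < univ.sup' univ_nonempty x := hi₀.trans_le (le_sup' x (mem_univ i₀))
    rw [dif_pos h, if_pos hsup, sum_eq_single i₀, if_pos hfirst, max_eq_left (by linarith)]
    · ring
    · intro j _ hj
      rcases hj.lt_or_gt with hlt | hgt
      · simp [max_eq_zero (hfirst j hlt)]
      · exact if_neg fun hall => (hall i₀ hgt).not_gt hi₀
    · simp
  · have hle : ∀ i, x i ≤ t := fun i => not_lt.1 fun hit => h ⟨i, mem_filter.2 ⟨mem_univ i, hit⟩⟩
    rw [dif_neg h, if_neg (sup'_le _ _ fun i _ => hle i).not_gt]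
    simp [max_eq_zero (hle _)]

end Deterministic

namespace ProbabilityTheory

variable {Ω : Type*} [MeasurableSpace Ω] {μ : Measure Ω}

theorem integral_le_add_integral_max_sub [IsProbabilityMeasure μ] {f : Ω → ℝ}
    (hf : Integrable f μ) (t : ℝ) : ∫ ω, f ω ∂μ ≤ t + ∫ ω, max (f ω - t) 0 ∂μ := by
  have hpos : Integrable (fun ω => max (f ω - t) 0) μ := (hf.sub (integrable_const t)).pos_part
  calc ∫ ω, f ω ∂μ ≤ ∫ ω, (t + max (f ω - t) 0) ∂μ :=
        integral_mono hf ((integrable_const t).add hpos) fun ω => by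
          simp only; linarith [le_max_left (f ω - t) 0]
    _ = t + ∫ ω, max (f ω - t) 0 ∂μ := by simp [integral_add (integrable_const t) hpos]

theorem IndepFun.integral_indicator_preimage {β : Type*} [MeasurableSpace β] {f : Ω → β}
    {g : Ω → ℝ} (hfg : IndepFun f g μ) (hf : Measurable f) (hg : AEStronglyMeasurable g μ)
    {s : Set β} (hs : MeasurableSet s) :
    ∫ ω, (f ⁻¹' s).indicator g ω ∂μ = μ.real (f ⁻¹' s) * ∫ ω, g ω ∂μ := by
  have hind : IndepFun (s.indicator (1 : β → ℝ) ∘ f) g μ :=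
    hfg.comp (measurable_one.indicator hs) measurable_id
  have hprod := hind.integral_mul_eq_mul_integral
    ((measurable_one.indicator hs).comp hf).aestronglyMeasurable hg
  have hcomp : s.indicator (1 : β → ℝ) ∘ f = (f ⁻¹' s).indicator 1 := by
    ext ω
    by_cases hω : f ω ∈ s <;> simp [hω]
  rw [hcomp, integral_indicator_one (hf hs)] at hprod
  rw [← hprod]
  congr 1; ext ω
  by_cases hω : ω ∈ f ⁻¹' s <;> simp [hω]

theorem iIndepFun.integral_indicator_forall_lt_le {ι : Type*} [Fintype ι] [LinearOrder ι]
    {X : ι → Ω → ℝ} (hX : iIndepFun X μ) (hXm : ∀ i, Measurable (X i)) (t : ℝ) (i : ι)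
    {g : ℝ → ℝ} (hg : Measurable g) :
    ∫ ω, {ω | ∀ j < i, X j ω ≤ t}.indicator (fun ω => g (X i ω)) ω ∂μ =
      μ.real {ω | ∀ j < i, X j ω ≤ t} * ∫ ω, g (X i ω) ∂μ := by
  classical
  set S := univ.filter (· < i)
  have hind : IndepFun (fun ω (j : S) => X j ω) (fun ω => g (X i ω)) μ :=
    (hX.indepFun_finset S {i} (by simp [S]) hXm).comp measurable_id
      (hg.comp (measurable_pi_apply (⟨i, mem_singleton_self i⟩ : ({i} : Finset ι))))
  have hset : {ω | ∀ j < i, X j ω ≤ t} = (fun ω (j : S) => X j ω) ⁻¹' {v | ∀ j, v j ≤ t} := by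
    ext ω; simp [S]
  have hmeas : MeasurableSet {v : S → ℝ | ∀ j, v j ≤ t} := by
    simp only [Set.ofPred_forall]
    exact MeasurableSet.iInter fun j => measurableSet_le (measurable_pi_apply j) measurable_const
  rw [hset]
  exact hind.integral_indicator_preimage (measurable_pi_lambda _ fun j => hXm j)
    (hg.comp (hXm i)).aestronglyMeasurable hmeas

section Stopping

variable {ι : Type*} [Fintype ι] [Nonempty ι] {X : ι → Ω → ℝ}

theorem integrable_max_sub_of_integrable_sup' [IsFiniteMeasure μ] (hXm : ∀ i, Measurable (X i))
    (hM : Integrable (fun ω => univ.sup' univ_nonempty (X · ω)) μ) (t : ℝ) (i : ι) :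
    Integrable (fun ω => max (X i ω - t) 0) μ := by
  refine (hM.sub (integrable_const t)).pos_part.mono (by fun_prop) (ae_of_all _ fun ω => ?_)
  rw [Real.norm_of_nonneg (le_max_right _ _), Real.norm_of_nonneg (le_max_right _ _)]
  exact max_le_max_right 0 (sub_le_sub_right (le_sup' (X · ω) (mem_univ i)) t)

theorem integral_max_sup'_sub_le_sum_integral [IsFiniteMeasure μ] (hXm : ∀ i, Measurable (X i))
    (hM : Integrable (fun ω => univ.sup' univ_nonempty (X · ω)) μ) (t : ℝ) :
    ∫ ω, max (univ.sup' univ_nonempty (X · ω) - t) 0 ∂μ ≤ ∑ i, ∫ ω, max (X i ω - t) 0 ∂μ := by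
  have hY := integrable_max_sub_of_integrable_sup' hXm hM t
  rw [← integral_finsetSum _ fun i _ => hY i]
  exact integral_mono (hM.sub (integrable_const t)).pos_part
    (integrable_finsetSum _ fun i _ => hY i) fun ω => max_sup'_sub_le_sum univ_nonempty _ t

variable [LinearOrder ι]

theorem integral_firstExceedingValue (hX : iIndepFun X μ) (hXm : ∀ i, Measurable (X i))
    (hM : Integrable (fun ω => univ.sup' univ_nonempty (X · ω)) μ) (t : ℝ) :
    ∫ ω, firstExceedingValue t (X · ω) ∂μ =
      t * μ.real {ω | t < univ.sup' univ_nonempty (X · ω)} +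
        ∑ i, μ.real {ω | ∀ j < i, X j ω ≤ t} * ∫ ω, max (X i ω - t) 0 ∂μ := by
  have := hX.isProbabilityMeasure
  have hY := integrable_max_sub_of_integrable_sup' hXm hM t
  have hA : MeasurableSet {ω | t < univ.sup' univ_nonempty (X · ω)} := by measurability
  have hB : ∀ i, MeasurableSet {ω | ∀ j < i, X j ω ≤ t} := by measurability
  calc ∫ ω, firstExceedingValue t (X · ω) ∂μ
      = ∫ ω, ({ω | t < univ.sup' univ_nonempty (X · ω)}.indicator (fun _ => t) ω +
          ∑ i, {ω | ∀ j < i, X j ω ≤ t}.indicator (fun ω => max (X i ω - t) 0) ω) ∂μ := by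
        simp only [firstExceedingValue_eq, Set.indicator_apply, Set.mem_ofPred_eq]
    _ = _ := by
        rw [integral_add ((integrable_const t).indicator hA)
          (integrable_finsetSum _ fun i _ => (hY i).indicator (hB i)),
          integral_indicator_const t hA, integral_finsetSum _ fun i _ => (hY i).indicator (hB i),
          smul_eq_mul, mul_comm]
        congr 1
        exact sum_congr rfl fun i _ => hX.integral_indicator_forall_lt_le hXm t i
          (g := fun x => max (x - t) 0) (by fun_prop)

end Stopping

end ProbabilityTheory

open Classical in
theorem prophet_inequality_general
    {Ω : Type*} [MeasurableSpace Ω] (μ : Measure Ω) [IsProbabilityMeasure μ]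
    (n : ℕ) [NeZero n] (X : Fin n → Ω → ℝ)
    (hXm : ∀ i, Measurable (X i))
    (hindep : iIndepFun X μ)
    (hXint : Integrable
      (fun ω => Finset.univ.sup' Finset.univ_nonempty (fun i => X i ω)) μ)
    (π : ℝ)
    (hmed1 : μ {ω | Finset.univ.sup' Finset.univ_nonempty (fun i => X i ω) ≤ π} = 1/2)
    (hmed2 : μ {ω | π < Finset.univ.sup' Finset.univ_nonempty (fun i => X i ω)} = 1/2) :
    (1/2) * ∫ ω, Finset.univ.sup' Finset.univ_nonempty (fun i => X i ω) ∂μ ≤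
      ∫ ω, (if h : (Finset.univ.filter (fun i => π < X i ω)).Nonempty
            then X ((Finset.univ.filter (fun i => π < X i ω)).min' h) ω
            else 0) ∂μ := by
  have hstop : μ.real {ω | π < univ.sup' univ_nonempty (X · ω)} = 1 / 2 := by
    rw [measureReal_def, hmed2]; norm_num
  have hcontinue (i : Fin n) : 1 / 2 ≤ μ.real {ω | ∀ j < i, X j ω ≤ π} := by
    calc 1 / 2 = μ.real {ω | univ.sup' univ_nonempty (X · ω) ≤ π} := by
          rw [measureReal_def, hmed1]; norm_num
      _ ≤ μ.real {ω | ∀ j < i, X j ω ≤ π} :=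
          measureReal_mono fun ω hω j _ => (le_sup' (X · ω) (mem_univ j)).trans hω
  change _ ≤ ∫ ω, firstExceedingValue π (X · ω) ∂μ
  rw [integral_firstExceedingValue hindep hXm hXint π, hstop]
  calc 1 / 2 * ∫ ω, univ.sup' univ_nonempty (X · ω) ∂μ
      ≤ 1 / 2 * (π + ∫ ω, max (univ.sup' univ_nonempty (X · ω) - π) 0 ∂μ) := by
        gcongr; exact integral_le_add_integral_max_sub hXint π
    _ ≤ 1 / 2 * (π + ∑ i, ∫ ω, max (X i ω - π) 0 ∂μ) := by
        gcongr; exact integral_max_sup'_sub_le_sum_integral hXm hXint π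
    _ = π * (1 / 2) + ∑ i, 1 / 2 * ∫ ω, max (X i ω - π) 0 ∂μ := by rw [mul_add, mul_sum]; ring
    _ ≤ π * (1 / 2) + ∑ i, μ.real {ω | ∀ j < i, X j ω ≤ π} * ∫ ω, max (X i ω - π) 0 ∂μ := by
        gcongr with i
        exact hcontinue i

open Classical in
/-- Prophet inequality (Krengel–Sucheston, Samuel-Cahn): if `X_1,…,X_n` are independent
nonnegative random variables, the distribution of `X* = max_i X_i` has no point masses,
and `π` is the median of `X*`, then the value `Z` obtained by stopping at the first
index whose value exceeds `π` (and `0` if none exists) satisfies `E[Z] ≥ (1/2)·E[X*]`. -/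
theorem prophet_inequality
    {Ω : Type*} [MeasurableSpace Ω] (μ : Measure Ω) [IsProbabilityMeasure μ]
    (n : ℕ) [NeZero n] (X : Fin n → Ω → ℝ)
    (hXm : ∀ i, Measurable (X i))
    (hX0 : ∀ i ω, 0 ≤ X i ω)
    (hindep : iIndepFun X μ)
    (hXint : Integrable
      (fun ω => Finset.univ.sup' Finset.univ_nonempty (fun i => X i ω)) μ)
    (hatomless : ∀ r : ℝ,
      μ {ω | Finset.univ.sup' Finset.univ_nonempty (fun i => X i ω) = r} = 0)
    (π : ℝ)
    (hmed1 : μ {ω | Finset.univ.sup' Finset.univ_nonempty (fun i => X i ω) ≤ π} = 1/2)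
    (hmed2 : μ {ω | π < Finset.univ.sup' Finset.univ_nonempty (fun i => X i ω)} = 1/2) :
    (1/2) * ∫ ω, Finset.univ.sup' Finset.univ_nonempty (fun i => X i ω) ∂μ ≤
      ∫ ω, (if h : (Finset.univ.filter (fun i => π < X i ω)).Nonempty
            then X ((Finset.univ.filter (fun i => π < X i ω)).min' h) ω
            else 0) ∂μ :=
  prophet_inequality_general μ n X hXm hindep hXint π hmed1 hmed2
end

section
/- Let κ ≥ 0 and p ≥ 0 be reals, and let r be a random variable on [e^{-1}, 1] with density f(r) = 1/r. Suppose a bidder wins and earns r·κ whenever r < 1 - p/κ (and earns 0 otherwise), and set this contribution to 0 if p ≥ (1 - e^{-1})κ. Then E[r·κ·1{r < 1 - p/κ}] + p ≥ (1 - 1/e)·κ. -/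
/-!
On the event `r < c` the payoff `r κ` cancels the density `1 / r`, so for
`c = 1 - p / κ ∈ [e⁻¹, 1]` the expected payoff is exactly `κ (c - e⁻¹) = (1 - e⁻¹) κ - p`,
and the inequality holds with equality. When `p ≥ (1 - e⁻¹) κ` the price alone suffices.
-/

open MeasureTheory Set

theorem setIntegral_Icc_indicator_Iio_const {a b c : ℝ} (hac : a ≤ c) (hcb : c ≤ b) (κ : ℝ) :
    ∫ r in Icc a b, (Iio c).indicator (fun _ ↦ κ) r = (c - a) * κ := by
  have hinter : Icc a b ∩ Iio c = Ico a c := by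
    ext x
    simp only [mem_inter_iff, mem_Icc, mem_Iio, mem_Ico]
    exact ⟨fun ⟨⟨hax, _⟩, hxc⟩ ↦ ⟨hax, hxc⟩, fun ⟨hax, hxc⟩ ↦ ⟨⟨hax, hxc.le.trans hcb⟩, hxc⟩⟩
  rw [setIntegral_indicator measurableSet_Iio, hinter, setIntegral_const,
    Real.volume_real_Ico_of_le hac, smul_eq_mul]

theorem setIntegral_Icc_ite_lt_mul_mul_inv {a b c : ℝ} (ha : 0 < a) (hac : a ≤ c) (hcb : c ≤ b)
    (κ : ℝ) :
    ∫ r in Icc a b, (if r < c then r * κ else 0) * (1 / r) = (c - a) * κ := by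
  rw [← setIntegral_Icc_indicator_Iio_const hac hcb κ]
  refine setIntegral_congr_fun measurableSet_Icc fun r hr ↦ ?_
  have hr0 : r ≠ 0 := (ha.trans_le hr.1).ne'
  by_cases hrc : r < c
  · simp only [hrc, if_true, indicator_of_mem (mem_Iio.mpr hrc)]
    field_simp
  · simp [hrc]

open Classical in
theorem dutch_smoothness_general (κ p : ℝ) (hp : 0 ≤ p) :
    (1 - Real.exp (-1)) * κ ≤
      (if (1 - Real.exp (-1)) * κ ≤ p then 0
       else ∫ r in Set.Icc (Real.exp (-1)) 1,
         (if r < 1 - p / κ then r * κ else 0) * (1 / r)) + p := by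
  split_ifs with hpκ
  · linarith
  rw [not_le] at hpκ
  have he : Real.exp (-1) < 1 := Real.exp_lt_one_iff.mpr (by norm_num)
  have hκ : 0 < κ := pos_of_mul_pos_right (hp.trans_lt hpκ) (sub_pos.mpr he).le
  have hlow : Real.exp (-1) ≤ 1 - p / κ := by
    rw [le_sub_comm, div_le_iff₀ hκ]
    linarith
  have hhigh : 1 - p / κ ≤ 1 := sub_le_self _ (div_nonneg hp hκ.le)
  rw [setIntegral_Icc_ite_lt_mul_mul_inv (Real.exp_pos _) hlow hhigh]
  field_simp
  linarith

open Classical in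
/-- Dutch auction smoothness: with `r` drawn from `[e⁻¹, 1]` with density `1/r`, a bidder
earning `r·κ` whenever `r < 1 - p/κ` (contribution set to `0` if `p ≥ (1 - e⁻¹)κ`)
guarantees `E[r·κ·1{r < 1 - p/κ}] + p ≥ (1 - 1/e)·κ`. -/
theorem dutch_smoothness (κ p : ℝ) (hκ : 0 ≤ κ) (hp : 0 ≤ p) :
    (1 - Real.exp (-1)) * κ ≤
      (if (1 - Real.exp (-1)) * κ ≤ p then 0
       else ∫ r in Set.Icc (Real.exp (-1)) 1,
         (if r < 1 - p / κ then r * κ else 0) * (1 / r)) + p :=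
  dutch_smoothness_general κ p hp
end

section
/- Let κ ≥ 0 and p ≥ 0 be reals and α ∈ (0, 1]. Let r be a random variable on [e^{-α}, 1] with density f(r) = 1/(α·r). Then α·E[r·κ·1{(1-r)κ > p}] + p ≥ (1 - e^{-α})·κ. -/
/-!
The density `1/(αr)` cancels both the factor `α` and the bid `r`, so the right-hand side is
`κ` times the length of `{r ∈ [e^{-α}, 1] | r < 1 - p/κ}`, plus `p`. That length is at least
`1 - p/κ - e^{-α}`, and `κ (1 - p/κ - e^{-α}) + p = (1 - e^{-α}) κ`.
-/

open MeasureTheory Set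

theorem setOf_lt_one_sub_mul_eq_Iio {κ : ℝ} (p : ℝ) (hκ : 0 < κ) :
    {r : ℝ | p < (1 - r) * κ} = Iio (1 - p / κ) := by
  ext r
  simp only [mem_ofPred_eq, mem_Iio, lt_sub_iff_add_lt, ← lt_sub_iff_add_lt', div_lt_iff₀ hκ]

theorem Icc_inter_Iio_of_le {a b c : ℝ} (hcb : c ≤ b) : Icc a b ∩ Iio c = Ico a c := by
  ext r
  simp only [mem_inter_iff, mem_Icc, mem_Iio, mem_Ico]
  constructor
  · rintro ⟨⟨har, -⟩, hrc⟩
    exact ⟨har, hrc⟩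
  · rintro ⟨har, hrc⟩
    exact ⟨⟨har, hrc.le.trans hcb⟩, hrc⟩

theorem setIntegral_Icc_ite_lt_one_sub_mul_eq {κ p : ℝ} (a : ℝ) (hκ : 0 < κ) (hp : 0 ≤ p) :
    ∫ r in Icc a 1, (if p < (1 - r) * κ then κ else 0) = max (1 - p / κ - a) 0 * κ := by
  have hc : 1 - p / κ ≤ 1 := sub_le_self _ (div_nonneg hp hκ.le)
  calc ∫ r in Icc a 1, (if p < (1 - r) * κ then κ else 0)
      = ∫ r in Icc a 1, {r : ℝ | p < (1 - r) * κ}.indicator (fun _ ↦ κ) r := rfl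
    _ = ∫ r in Ico a (1 - p / κ), κ := by
      rw [setOf_lt_one_sub_mul_eq_Iio p hκ, setIntegral_indicator measurableSet_Iio,
        Icc_inter_Iio_of_le hc]
    _ = max (1 - p / κ - a) 0 * κ := by
      rw [setIntegral_const, Real.volume_real_Ico, smul_eq_mul]

theorem one_sub_mul_le_setIntegral_Icc_ite_lt_one_sub_mul_add {κ p : ℝ} (a : ℝ) (hκ : 0 ≤ κ)
    (hp : 0 ≤ p) :
    (1 - a) * κ ≤ (∫ r in Icc a 1, (if p < (1 - r) * κ then κ else 0)) + p := by
  rcases hκ.eq_or_lt with rfl | hκ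
  · simpa using hp
  rw [setIntegral_Icc_ite_lt_one_sub_mul_eq a hκ hp]
  calc (1 - a) * κ = (1 - p / κ - a) * κ + p := by field_simp; ring
    _ ≤ max (1 - p / κ - a) 0 * κ + p := by gcongr; exact le_max_left _ _

theorem mul_setIntegral_Icc_ite_mul_one_div {a : ℝ} (ha : 0 < a) {α : ℝ} (hα : α ≠ 0)
    (P : ℝ → Prop) [DecidablePred P] (κ : ℝ) :
    α * ∫ r in Icc a 1, (if P r then r * κ else 0) * (1 / (α * r)) =
      ∫ r in Icc a 1, (if P r then κ else 0) := by
  rw [← integral_const_mul]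
  refine setIntegral_congr_fun measurableSet_Icc fun r hr ↦ ?_
  have hr0 : r ≠ 0 := (ha.trans_le hr.1).ne'
  split_ifs
  · field_simp
  · rw [zero_mul, mul_zero]

open Classical in
theorem dutch_smoothness_alpha_general (κ p α : ℝ) (hκ : 0 ≤ κ) (hp : 0 ≤ p)
    (hα0 : 0 < α) :
    (1 - Real.exp (-α)) * κ ≤
      α * (∫ r in Set.Icc (Real.exp (-α)) 1,
            (if p < (1 - r) * κ then r * κ else 0) * (1 / (α * r))) + p := by
  rw [mul_setIntegral_Icc_ite_mul_one_div (Real.exp_pos _) hα0.ne']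
  exact one_sub_mul_le_setIntegral_Icc_ite_lt_one_sub_mul_add _ hκ hp

open Classical in
/-- α-smoothness for the Dutch auction: with `r` drawn from `[e^{-α}, 1]` with density
`1/(α·r)`, we have `α·E[r·κ·1{(1-r)κ > p}] + p ≥ (1 - e^{-α})·κ`. -/
theorem dutch_smoothness_alpha (κ p α : ℝ) (hκ : 0 ≤ κ) (hp : 0 ≤ p)
    (hα0 : 0 < α) (hα1 : α ≤ 1) :
    (1 - Real.exp (-α)) * κ ≤
      α * (∫ r in Set.Icc (Real.exp (-α)) 1,
            (if p < (1 - r) * κ then r * κ else 0) * (1 / (α * r))) + p :=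
  dutch_smoothness_alpha_general κ p α hκ hp hα0
end

section
/- Let κ_{ij} ≥ 0, and let p_i, p^j ≥ 0 with p = max{p_i, p^j}. Let r be a random variable on [e^{-2}, 1] with density f(r) = 1/(2r). Suppose a quantity X(r) satisfies X(r) ≥ r·κ_{ij} whenever r < 1 - p/κ_{ij}, and X(r) ≥ 0 always. Then E[X(r)] + (1/2)p_i + (1/2)p^j ≥ (1/2)(1 - e^{-2})·κ_{ij}. -/
/-!
Bidding the shaded value `(1 - r) κ` wins whenever `r < 1 - p/κ`, and on that range the
density `1/(2r)` exactly cancels the factor `r` in `X r ≥ r κ`. So the integral is at least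
`κ/2` times the length `1 - p/κ - e⁻²` of the winning range, i.e. `(1 - e⁻²) κ/2 - p/2`, and
`p = max pᵢ pʲ ≤ pᵢ + pʲ`. When the winning range is empty, `p` alone already dominates.
Clipping the right end of the range from below at `e⁻²` treats both cases at once.
-/

open MeasureTheory Set

theorem mul_le_setIntegral_Icc_of_le_on_Ico {f : ℝ → ℝ} {a b c m : ℝ} (hac : a ≤ c)
    (hcb : c ≤ b) (hf : IntegrableOn f (Icc a b)) (hf0 : ∀ x ∈ Icc a b, 0 ≤ f x)
    (hfm : ∀ x ∈ Ico a c, m ≤ f x) :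
    (c - a) * m ≤ ∫ x in Icc a b, f x :=
  calc (c - a) * m = ∫ _ in Ico a c, m := by
        rw [setIntegral_const, Real.volume_real_Ico_of_le hac, smul_eq_mul]
    _ ≤ ∫ x in Ico a c, f x :=
        setIntegral_mono_on (integrableOn_const (by simp)) (hf.mono_set (Ico_subset_Icc_self.trans
          (Icc_subset_Icc_right hcb))) measurableSet_Ico hfm
    _ ≤ ∫ x in Icc a b, f x :=
        setIntegral_mono_set hf ((ae_restrict_iff' measurableSet_Icc).2 (ae_of_all _ hf0))
          (Ico_subset_Icc_self.trans (Icc_subset_Icc_right hcb)).eventuallyLE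

theorem half_le_mul_one_div_two_mul {r κ y : ℝ} (hr : 0 < r) (h : r * κ ≤ y) :
    κ / 2 ≤ y * (1 / (2 * r)) := by
  rw [mul_one_div, le_div_iff₀ (by positivity)]
  linarith

theorem multi_item_smoothness_general (κ pi pj : ℝ) (hpi : 0 ≤ pi) (hpj : 0 ≤ pj)
    (X : ℝ → ℝ)
    (hX0 : ∀ r ∈ Set.Icc (Real.exp (-2)) 1, 0 ≤ X r)
    (hXr : ∀ r ∈ Set.Icc (Real.exp (-2)) 1, r < 1 - max pi pj / κ → r * κ ≤ X r)
    (hXint : IntegrableOn (fun r => X r * (1 / (2 * r))) (Set.Icc (Real.exp (-2)) 1)) :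
    (1/2) * (1 - Real.exp (-2)) * κ ≤
      (∫ r in Set.Icc (Real.exp (-2)) 1, X r * (1 / (2 * r))) +
        (1/2) * pi + (1/2) * pj := by
  set a := Real.exp (-2)
  set p := max pi pj
  have ha1 : a ≤ 1 := Real.exp_le_one_iff.2 (by norm_num)
  have hdensity : ∀ r ∈ Icc a 1, 0 ≤ X r * (1 / (2 * r)) := fun r hr =>
    mul_nonneg (hX0 r hr) (by have := (Real.exp_pos (-2)).trans_le hr.1; positivity)
  rcases le_or_gt κ 0 with hκ | hκ
  · have := setIntegral_nonneg (μ := volume) measurableSet_Icc hdensity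
    nlinarith
  set c := max a (1 - p / κ)
  have hp : 0 ≤ p := hpi.trans (le_max_left _ _)
  have hc1 : c ≤ 1 := max_le ha1 (by linarith [div_nonneg hp hκ.le])
  have hwin : ∀ r ∈ Ico a c, κ / 2 ≤ X r * (1 / (2 * r)) := fun r hr =>
    have hr' : r ∈ Icc a 1 := ⟨hr.1, hr.2.le.trans hc1⟩
    half_le_mul_one_div_two_mul ((Real.exp_pos (-2)).trans_le hr.1)
      (hXr r hr' ((lt_max_iff.1 hr.2).resolve_left hr.1.not_gt))
  have hint := mul_le_setIntegral_Icc_of_le_on_Ico (le_max_left _ _) hc1 hXint hdensity hwin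
  have hcκ : κ - p ≤ c * κ := by
    calc κ - p = (1 - p / κ) * κ := by field_simp
      _ ≤ c * κ := mul_le_mul_of_nonneg_right (le_max_right _ _) hκ.le
  have hpsum : p ≤ pi + pj := max_le_add_of_nonneg hpi hpj
  linarith

/-- Multi-item smoothness inequality (Lemma 4): with `r` drawn from `[e⁻², 1]` with
density `1/(2r)`, if `X r ≥ r·κ` whenever `r < 1 - max{p_i, p^j}/κ` and `X ≥ 0` always,
then `E[X(r)] + (1/2)p_i + (1/2)p^j ≥ (1/2)(1 - e⁻²)·κ`. -/
theorem multi_item_smoothness (κ pi pj : ℝ) (hκ : 0 ≤ κ) (hpi : 0 ≤ pi) (hpj : 0 ≤ pj)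
    (X : ℝ → ℝ)
    (hX0 : ∀ r ∈ Set.Icc (Real.exp (-2)) 1, 0 ≤ X r)
    (hXr : ∀ r ∈ Set.Icc (Real.exp (-2)) 1, r < 1 - max pi pj / κ → r * κ ≤ X r)
    (hXint : IntegrableOn (fun r => X r * (1 / (2 * r))) (Set.Icc (Real.exp (-2)) 1)) :
    (1/2) * (1 - Real.exp (-2)) * κ ≤
      (∫ r in Set.Icc (Real.exp (-2)) 1, X r * (1 / (2 * r))) +
        (1/2) * pi + (1/2) * pj :=
  multi_item_smoothness_general κ pi pj hpi hpj X hX0 hXr hXint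
end

section
/- Let D be a set of real-valued integrable functions on a probability space closed under the following property: for any σ_1, ..., σ_n ∈ D, their pointwise minimum min_i σ_i also belongs to D (as in the set DI^k of inspection-discouraging functions). Then for any measurable φ with values in a bounded interval [0, M], inf{E[φ·σ] : σ ∈ D} = E[φ·σ*], where σ* is the Radon–Nikodym density satisfying ∫_U σ* dμ = inf{∫_U σ dμ : σ ∈ D} for all measurable U, provided D is nonempty and the set-function U ↦ inf{∫_U σ dμ : σ ∈ D} is a countably additive signed measure absolutely continuous with respect to μ. -/
/-! On every measurable `U`, `∫_U σs` is the infimum of `∫_U σ` over `σ ∈ D`, and since `D` is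
closed under `⊓`, finitely many of these infima are approached by a single `σ ∈ D`. Approximating
`φ` from below, uniformly, by the step function `δ ⌊φ / δ⌋₊` then produces `σ ∈ D` with `∫ φ σ`
close to `∫ φ σs`. Conversely, if the integrals `∫ φ σ` are bounded below, so are the integrals
`∫_U σ` over every `U ⊆ {φ ≥ δ}` with `δ > 0`, which forces `σs ≤ σ` a.e. on `{φ > 0}`.
If they are unbounded below, so are the `∫ σ`, and since `sInf` of such a set of reals is `0`,
the defining identity makes every set integral of `σs` vanish: both sides are `0`. -/

open MeasureTheory

section

variable {Ω : Type*} [MeasurableSpace Ω] {μ : Measure Ω}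

lemma MeasureTheory.Integrable.nonneg_bdd_mul {φ g : Ω → ℝ} {M : ℝ} (hg : Integrable g μ)
    (hφ : Measurable φ) (hφ0 : ∀ ω, 0 ≤ φ ω) (hφM : ∀ ω, φ ω ≤ M) :
    Integrable (fun ω => φ ω * g ω) μ :=
  hg.bdd_mul hφ.aestronglyMeasurable <| .of_forall fun ω => by
    rw [Real.norm_of_nonneg (hφ0 ω)]; exact hφM ω

lemma integral_comp_mul_eq_sum_setIntegral {f : Ω → ℕ} {n : ℕ} (hf : Measurable f)
    (hfn : ∀ ω, f ω < n) (c : ℕ → ℝ) {g : Ω → ℝ} (hg : Integrable g μ) :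
    ∫ ω, c (f ω) * g ω ∂μ = ∑ i ∈ Finset.range n, c i * ∫ ω in f ⁻¹' {i}, g ω ∂μ := by
  have hU : ∀ i, MeasurableSet (f ⁻¹' {i}) := fun i => hf (measurableSet_singleton i)
  have hsum : (fun ω => c (f ω) * g ω) =
      fun ω => ∑ i ∈ Finset.range n, (f ⁻¹' {i}).indicator (fun ω => c i * g ω) ω := by
    funext ω
    classical
    simp only [Set.indicator_apply, Set.mem_preimage, Set.mem_singleton_iff]
    rw [Finset.sum_ite_eq_of_mem _ _ _ (Finset.mem_range.2 (hfn ω))]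
  rw [hsum, integral_finsetSum _ fun i _ => ((hg.const_mul (c i)).indicator (hU i))]
  refine Finset.sum_congr rfl fun i _ => ?_
  rw [integral_indicator (hU i), integral_const_mul]

lemma mul_le_mul_add_mul_max {s a δ x : ℝ} (hsa : s ≤ a) (has : a ≤ s + δ) :
    a * x ≤ s * x + δ * max x 0 := by
  rcases le_total 0 x with hx | hx
  · rw [max_eq_left hx]; nlinarith
  · rw [max_eq_right hx]; nlinarith

lemma mul_sub_mul_abs_le_mul {s a δ x : ℝ} (hsa : s ≤ a) (has : a ≤ s + δ) :
    s * x - δ * |x| ≤ a * x := by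
  rcases le_total 0 x with hx | hx
  · rw [abs_of_nonneg hx]; nlinarith
  · rw [abs_of_nonpos hx]; nlinarith

lemma mul_le_indicator_add_mul_max {α : Type*} {U : Set α} {δ a x y : ℝ} {ω : α} (hδ : 0 ≤ δ)
    (ha : 0 ≤ a) (hδa : ω ∈ U → δ ≤ a) (hxy : x ≤ y) :
    a * x ≤ U.indicator (fun _ => δ * x) ω + a * max y 0 := by
  by_cases hω : ω ∈ U
  · rw [Set.indicator_of_mem hω]
    have := hδa hω
    rcases le_total 0 x with hx | hx
    · nlinarith [le_max_left y 0]
    · nlinarith [le_max_right y 0]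
  · rw [Set.indicator_of_notMem hω, zero_add]
    exact mul_le_mul_of_nonneg_left (hxy.trans (le_max_left y 0)) ha

lemma integral_mul_sub_integral_mul_le {φ s σ τ : Ω → ℝ} {M δ : ℝ} (hφ : Measurable φ)
    (hs : Measurable s) (hs0 : ∀ ω, 0 ≤ s ω) (hsφ : ∀ ω, s ω ≤ φ ω)
    (hφs : ∀ ω, φ ω ≤ s ω + δ) (hφM : ∀ ω, φ ω ≤ M) (hσ : Integrable σ μ)
    (hτ : Integrable τ μ) :
    ∫ ω, φ ω * σ ω ∂μ - ∫ ω, φ ω * τ ω ∂μ ≤ ∫ ω, s ω * σ ω ∂μ - ∫ ω, s ω * τ ω ∂μ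
      + δ * (∫ ω, max (σ ω) 0 ∂μ + ∫ ω, |τ ω| ∂μ) := by
  have hφ0 : ∀ ω, 0 ≤ φ ω := fun ω => (hs0 ω).trans (hsφ ω)
  have hsM : ∀ ω, s ω ≤ M := fun ω => (hsφ ω).trans (hφM ω)
  have hsσ := hσ.nonneg_bdd_mul hs hs0 hsM
  have hsτ := hτ.nonneg_bdd_mul hs hs0 hsM
  have hupper : ∫ ω, φ ω * σ ω ∂μ ≤ ∫ ω, (s ω * σ ω + δ * max (σ ω) 0) ∂μ :=
    integral_mono (hσ.nonneg_bdd_mul hφ hφ0 hφM) (hsσ.add (hσ.pos_part.const_mul δ))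
      fun ω => mul_le_mul_add_mul_max (hsφ ω) (hφs ω)
  have hlower : ∫ ω, (s ω * τ ω - δ * |τ ω|) ∂μ ≤ ∫ ω, φ ω * τ ω ∂μ :=
    integral_mono (hsτ.sub (hτ.abs.const_mul δ)) (hτ.nonneg_bdd_mul hφ hφ0 hφM)
      fun ω => mul_sub_mul_abs_le_mul (hsφ ω) (hφs ω)
  rw [integral_add hsσ (hσ.pos_part.const_mul δ), integral_const_mul] at hupper
  rw [integral_sub hsτ (hτ.abs.const_mul δ), integral_const_mul] at hlower
  linarith

lemma integral_mul_le_of_ae_le {φ σ τ : Ω → ℝ} {M : ℝ} (hφ : Measurable φ)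
    (hφ0 : ∀ ω, 0 ≤ φ ω) (hφM : ∀ ω, φ ω ≤ M) (hσ : Integrable σ μ) (hτ : Integrable τ μ)
    (hle : ∀ᵐ ω ∂μ, 0 < φ ω → σ ω ≤ τ ω) :
    ∫ ω, φ ω * σ ω ∂μ ≤ ∫ ω, φ ω * τ ω ∂μ := by
  refine integral_mono_ae (hσ.nonneg_bdd_mul hφ hφ0 hφM) (hτ.nonneg_bdd_mul hφ hφ0 hφM) ?_
  filter_upwards [hle] with ω hω
  rcases (hφ0 ω).eq_or_lt with hzero | hpos
  · simp [← hzero]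
  · exact mul_le_mul_of_nonneg_left (hω hpos) (hφ0 ω)

structure IsEssInfDensity (μ : Measure Ω) (D : Set (Ω → ℝ)) (σs : Ω → ℝ) : Prop where
  nonempty : D.Nonempty
  integrable_of_mem : ∀ σ ∈ D, Integrable σ μ
  infClosed : InfClosed D
  integrable : Integrable σs μ
  setIntegral_eq_sInf : ∀ U, MeasurableSet U →
    ∫ ω in U, σs ω ∂μ = sInf ((fun σ : Ω → ℝ => ∫ ω in U, σ ω ∂μ) '' D)

namespace IsEssInfDensity

variable {D : Set (Ω → ℝ)} {σs φ : Ω → ℝ} {M : ℝ}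

lemma exists_setIntegral_lt (h : IsEssInfDensity μ D σs) {U : Set Ω} (hU : MeasurableSet U)
    {ε : ℝ} (hε : 0 < ε) : ∃ σ ∈ D, ∫ ω in U, σ ω ∂μ < ∫ ω in U, σs ω ∂μ + ε := by
  rw [h.setIntegral_eq_sInf U hU]
  obtain ⟨_, ⟨σ, hσ, rfl⟩, hlt⟩ :=
    exists_lt_of_csInf_lt (h.nonempty.image _) (lt_add_of_pos_right _ hε)
  exact ⟨σ, hσ, hlt⟩

lemma setIntegral_inf_le_left (h : IsEssInfDensity μ D σs) {σ τ : Ω → ℝ} (hσ : σ ∈ D)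
    (hτ : τ ∈ D) (U : Set Ω) : ∫ ω in U, (σ ⊓ τ) ω ∂μ ≤ ∫ ω in U, σ ω ∂μ :=
  setIntegral_mono (h.integrable_of_mem _ (h.infClosed hσ hτ)).integrableOn
    (h.integrable_of_mem σ hσ).integrableOn fun _ => inf_le_left

lemma exists_le_forall_setIntegral_lt (h : IsEssInfDensity μ D σs) {ι : Type*}
    (t : Finset ι) {U : ι → Set Ω} (hU : ∀ i, MeasurableSet (U i)) {ε : ℝ} (hε : 0 < ε)
    {σ₀ : Ω → ℝ} (hσ₀ : σ₀ ∈ D) :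
    ∃ σ ∈ D, σ ≤ σ₀ ∧ ∀ i ∈ t, ∫ ω in U i, σ ω ∂μ < ∫ ω in U i, σs ω ∂μ + ε := by
  classical
  induction t using Finset.induction_on with
  | empty => exact ⟨σ₀, hσ₀, le_rfl, by simp⟩
  | insert j t _ ih =>
    obtain ⟨σ, hσ, hσσ₀, hlt⟩ := ih
    obtain ⟨τ, hτ, hτlt⟩ := h.exists_setIntegral_lt (hU j) hε
    refine ⟨σ ⊓ τ, h.infClosed hσ hτ, inf_le_left.trans hσσ₀, fun i hi => ?_⟩
    rcases Finset.mem_insert.1 hi with rfl | hi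
    · rw [inf_comm]
      exact (h.setIntegral_inf_le_left hτ hσ _).trans_lt hτlt
    · exact (h.setIntegral_inf_le_left hσ hτ _).trans_lt (hlt i hi)

lemma exists_le_sum_mul_setIntegral_lt (h : IsEssInfDensity μ D σs) {ι : Type*}
    (t : Finset ι) {c : ι → ℝ} (hc : ∀ i ∈ t, 0 ≤ c i) {U : ι → Set Ω}
    (hU : ∀ i, MeasurableSet (U i)) {ε : ℝ} (hε : 0 < ε) {σ₀ : Ω → ℝ} (hσ₀ : σ₀ ∈ D) :
    ∃ σ ∈ D, σ ≤ σ₀ ∧ ∑ i ∈ t, c i * ∫ ω in U i, σ ω ∂μ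
      < ∑ i ∈ t, c i * ∫ ω in U i, σs ω ∂μ + ε := by
  set C := ∑ i ∈ t, c i
  have hC : 0 ≤ C := Finset.sum_nonneg hc
  obtain ⟨σ, hσ, hσσ₀, hlt⟩ :=
    h.exists_le_forall_setIntegral_lt t hU (div_pos hε (by linarith : 0 < C + 1)) hσ₀
  have hCε : C * (ε / (C + 1)) < ε := by
    rw [← mul_div_assoc, div_lt_iff₀ (by linarith)]
    nlinarith
  refine ⟨σ, hσ, hσσ₀, ?_⟩
  calc ∑ i ∈ t, c i * ∫ ω in U i, σ ω ∂μ
      ≤ ∑ i ∈ t, c i * (∫ ω in U i, σs ω ∂μ + ε / (C + 1)) :=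
        Finset.sum_le_sum fun i hi => mul_le_mul_of_nonneg_left (hlt i hi).le (hc i hi)
    _ = ∑ i ∈ t, c i * ∫ ω in U i, σs ω ∂μ + C * (ε / (C + 1)) := by
        simp only [C, mul_add, Finset.sum_add_distrib, Finset.sum_mul]
    _ < ∑ i ∈ t, c i * ∫ ω in U i, σs ω ∂μ + ε := by linarith

lemma exists_integral_mul_lt (h : IsEssInfDensity μ D σs) (hφ : Measurable φ)
    (hφ0 : ∀ ω, 0 ≤ φ ω) (hφM : ∀ ω, φ ω ≤ M) {ε : ℝ} (hε : 0 < ε) :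
    ∃ σ ∈ D, ∫ ω, φ ω * σ ω ∂μ < ∫ ω, φ ω * σs ω ∂μ + ε := by
  obtain ⟨σ₀, hσ₀⟩ := h.nonempty
  set P := ∫ ω, max (σ₀ ω) 0 ∂μ + ∫ ω, |σs ω| ∂μ
  have hP : 0 ≤ P := add_nonneg (integral_nonneg fun _ => le_max_right _ _)
    (integral_nonneg fun _ => abs_nonneg _)
  set δ := ε / (2 * (P + 1))
  have hδ : 0 < δ := by positivity
  have hδP : δ * P < ε / 2 := by
    rw [div_mul_eq_mul_div, div_lt_div_iff₀ (by positivity) two_pos]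
    nlinarith
  -- `δ * f` is a simple function within `δ` below `φ`, constant on the slabs `f ⁻¹' {i}`
  set f : Ω → ℕ := fun ω => ⌊φ ω / δ⌋₊
  have hf : Measurable f := (hφ.div_const δ).nat_floor
  have hfn : ∀ ω, f ω < ⌊M / δ⌋₊ + 1 := fun ω =>
    Nat.lt_succ_of_le (Nat.floor_le_floor (div_le_div_of_nonneg_right (hφM ω) hδ.le))
  have hfφ : ∀ ω, δ * f ω ≤ φ ω := fun ω =>
    (le_div_iff₀' hδ).1 (Nat.floor_le (div_nonneg (hφ0 ω) hδ.le))
  have hφf : ∀ ω, φ ω ≤ δ * f ω + δ := fun ω => by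
    have := (div_lt_iff₀' hδ).1 (Nat.lt_floor_add_one (φ ω / δ))
    linarith
  obtain ⟨σ, hσ, hσσ₀, hlt⟩ := h.exists_le_sum_mul_setIntegral_lt (c := fun i : ℕ => δ * i)
    (Finset.range (⌊M / δ⌋₊ + 1)) (fun i _ => mul_nonneg hδ.le i.cast_nonneg)
    (fun i => hf (measurableSet_singleton i)) (half_pos hε) hσ₀
  have hσint := h.integrable_of_mem σ hσ
  rw [← integral_comp_mul_eq_sum_setIntegral hf hfn _ hσint,
    ← integral_comp_mul_eq_sum_setIntegral hf hfn _ h.integrable] at hlt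
  have happrox := integral_mul_sub_integral_mul_le (s := fun ω => δ * f ω) hφ (by fun_prop)
    (fun ω => mul_nonneg hδ.le (f ω).cast_nonneg) hfφ hφf hφM hσint h.integrable
  have hpos : δ * ∫ ω, max (σ ω) 0 ∂μ ≤ δ * ∫ ω, max (σ₀ ω) 0 ∂μ :=
    mul_le_mul_of_nonneg_left (integral_mono hσint.pos_part
      (h.integrable_of_mem σ₀ hσ₀).pos_part fun ω => max_le_max (hσσ₀ ω) le_rfl) hδ.le
  exact ⟨σ, hσ, by linarith⟩

lemma bddBelow_setIntegral_of_le_on (h : IsEssInfDensity μ D σs) (hφ : Measurable φ)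
    (hφ0 : ∀ ω, 0 ≤ φ ω) (hφM : ∀ ω, φ ω ≤ M)
    (hJ : BddBelow ((fun σ : Ω → ℝ => ∫ ω, φ ω * σ ω ∂μ) '' D)) {δ : ℝ} (hδ : 0 < δ)
    {U : Set Ω} (hU : MeasurableSet U) (hδU : ∀ ω ∈ U, δ ≤ φ ω) :
    BddBelow ((fun σ : Ω → ℝ => ∫ ω in U, σ ω ∂μ) '' D) := by
  obtain ⟨b, hb⟩ := hJ
  obtain ⟨σ₁, hσ₁⟩ := h.nonempty
  set P := ∫ ω, φ ω * max (σ₁ ω) 0 ∂μ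
  refine ⟨(b - P) / δ, ?_⟩
  rintro _ ⟨σ, hσ, rfl⟩
  have hτ : σ ⊓ σ₁ ∈ D := h.infClosed hσ hσ₁
  have hτint := h.integrable_of_mem _ hτ
  have hφσ₁ := (h.integrable_of_mem σ₁ hσ₁).pos_part.nonneg_bdd_mul hφ hφ0 hφM
  -- passing to `σ ⊓ σ₁` bounds the contribution of `{σ > 0}` by the fixed `∫ φ σ₁⁺`
  have hsplit : ∫ ω, φ ω * (σ ⊓ σ₁) ω ∂μ ≤ δ * ∫ ω in U, (σ ⊓ σ₁) ω ∂μ + P := by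
    calc ∫ ω, φ ω * (σ ⊓ σ₁) ω ∂μ
        ≤ ∫ ω, (U.indicator (fun ω => δ * (σ ⊓ σ₁) ω) ω + φ ω * max (σ₁ ω) 0) ∂μ :=
          integral_mono (hτint.nonneg_bdd_mul hφ hφ0 hφM)
            (((hτint.const_mul δ).indicator hU).add hφσ₁) fun ω =>
              mul_le_indicator_add_mul_max hδ.le (hφ0 ω) (hδU ω) inf_le_right
      _ = δ * ∫ ω in U, (σ ⊓ σ₁) ω ∂μ + P := by
          rw [integral_add ((hτint.const_mul δ).indicator hU) hφσ₁, integral_indicator hU,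
            integral_const_mul]
  have hbτ : b ≤ ∫ ω, φ ω * (σ ⊓ σ₁) ω ∂μ := hb ⟨_, hτ, rfl⟩
  have hτσ := mul_le_mul_of_nonneg_left (h.setIntegral_inf_le_left hσ hσ₁ U) hδ.le
  rw [div_le_iff₀' hδ]
  linarith

lemma ae_le_of_bddBelow_inter (h : IsEssInfDensity μ D σs) {S : Set Ω} (hS : MeasurableSet S)
    (hbdd : ∀ U, MeasurableSet U → BddBelow ((fun σ : Ω → ℝ => ∫ ω in U ∩ S, σ ω ∂μ) '' D))
    {σ : Ω → ℝ} (hσ : σ ∈ D) : ∀ᵐ ω ∂μ, ω ∈ S → σs ω ≤ σ ω := by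
  rw [← ae_restrict_iff' hS]
  refine ae_le_of_forall_setIntegral_le h.integrable.integrableOn
    (h.integrable_of_mem σ hσ).integrableOn fun U hU _ => ?_
  rw [Measure.restrict_restrict hU, h.setIntegral_eq_sInf _ (hU.inter hS)]
  exact csInf_le (hbdd U hU) ⟨σ, hσ, rfl⟩

lemma ae_le_of_pos_of_bddBelow (h : IsEssInfDensity μ D σs) (hφ : Measurable φ)
    (hφ0 : ∀ ω, 0 ≤ φ ω) (hφM : ∀ ω, φ ω ≤ M)
    (hJ : BddBelow ((fun σ : Ω → ℝ => ∫ ω, φ ω * σ ω ∂μ) '' D)) {σ : Ω → ℝ} (hσ : σ ∈ D) :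
    ∀ᵐ ω ∂μ, 0 < φ ω → σs ω ≤ σ ω := by
  have hlayer : ∀ n : ℕ, ∀ᵐ ω ∂μ, ω ∈ {ω | 1 / ((n : ℝ) + 1) ≤ φ ω} → σs ω ≤ σ ω := fun n =>
    have hS : MeasurableSet {ω | 1 / ((n : ℝ) + 1) ≤ φ ω} := measurableSet_le measurable_const hφ
    h.ae_le_of_bddBelow_inter hS (fun _ hU => h.bddBelow_setIntegral_of_le_on hφ hφ0 hφM hJ
      Nat.one_div_pos_of_nat (hU.inter hS) fun _ hω => hω.2) hσ
  filter_upwards [ae_all_iff.2 hlayer] with ω hω hpos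
  obtain ⟨n, hn⟩ := exists_nat_one_div_lt hpos
  exact hω n hn.le

lemma bddBelow_integral_mul (h : IsEssInfDensity μ D σs) (hφ : Measurable φ)
    (hφ0 : ∀ ω, 0 ≤ φ ω) (hφM : ∀ ω, φ ω ≤ M)
    (hB : BddBelow ((fun σ : Ω → ℝ => ∫ ω, σ ω ∂μ) '' D)) :
    BddBelow ((fun σ : Ω → ℝ => ∫ ω, φ ω * σ ω ∂μ) '' D) := by
  have hB1 : BddBelow ((fun σ : Ω → ℝ => ∫ ω, (fun _ => (1 : ℝ)) ω * σ ω ∂μ) '' D) := by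
    simpa only [one_mul] using hB
  refine ⟨∫ ω, φ ω * σs ω ∂μ, ?_⟩
  rintro _ ⟨σ, hσ, rfl⟩
  refine integral_mul_le_of_ae_le hφ hφ0 hφM h.integrable (h.integrable_of_mem σ hσ) ?_
  filter_upwards [h.ae_le_of_pos_of_bddBelow measurable_const (fun _ => zero_le_one)
    (fun _ => le_rfl) hB1 hσ] with ω hω _
  exact hω one_pos

lemma ae_eq_zero_of_not_bddBelow (h : IsEssInfDensity μ D σs)
    (hB : ¬ BddBelow ((fun σ : Ω → ℝ => ∫ ω, σ ω ∂μ) '' D)) : σs =ᵐ[μ] 0 := by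
  have huniv : ∫ ω, σs ω ∂μ = 0 := by
    simpa [Real.sInf_of_not_bddBelow hB] using h.setIntegral_eq_sInf _ MeasurableSet.univ
  refine h.integrable.ae_eq_zero_of_forall_setIntegral_eq_zero fun U hU _ => ?_
  by_cases hbU : BddBelow ((fun σ : Ω → ℝ => ∫ ω in U, σ ω ∂μ) '' D)
  · have hbUc : ¬ BddBelow ((fun σ : Ω → ℝ => ∫ ω in Uᶜ, σ ω ∂μ) '' D) := by
      rintro ⟨c, hc⟩
      obtain ⟨b, hb⟩ := hbU
      refine hB ⟨b + c, ?_⟩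
      rintro _ ⟨σ, hσ, rfl⟩
      change b + c ≤ ∫ ω, σ ω ∂μ
      rw [← integral_add_compl hU (h.integrable_of_mem σ hσ)]
      exact add_le_add (hb ⟨σ, hσ, rfl⟩) (hc ⟨σ, hσ, rfl⟩)
    have hadd := integral_add_compl hU h.integrable
    rw [h.setIntegral_eq_sInf Uᶜ hU.compl, Real.sInf_of_not_bddBelow hbUc] at hadd
    linarith
  · rw [h.setIntegral_eq_sInf U hU, Real.sInf_of_not_bddBelow hbU]

end IsEssInfDensity

end

theorem essential_inf_extension_general
    {Ω : Type*} [MeasurableSpace Ω] (μ : Measure Ω)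
    (D : Set (Ω → ℝ)) (hD : D.Nonempty)
    (hDint : ∀ σ ∈ D, Integrable σ μ)
    (hDmin : ∀ σ₁ ∈ D, ∀ σ₂ ∈ D, (fun ω => min (σ₁ ω) (σ₂ ω)) ∈ D)
    (σs : Ω → ℝ) (hσs : Integrable σs μ)
    (hRN : ∀ U : Set Ω, MeasurableSet U →
      (∫ ω in U, σs ω ∂μ) = sInf ((fun σ : Ω → ℝ => ∫ ω in U, σ ω ∂μ) '' D))
    (M : ℝ) (φ : Ω → ℝ) (hφ : Measurable φ)
    (hφ0 : ∀ ω, 0 ≤ φ ω) (hφM : ∀ ω, φ ω ≤ M) :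
    (∫ ω, φ ω * σs ω ∂μ) = sInf ((fun σ : Ω → ℝ => ∫ ω, φ ω * σ ω ∂μ) '' D) := by
  have h : IsEssInfDensity μ D σs := ⟨hD, hDint, fun _ h₁ _ h₂ => hDmin _ h₁ _ h₂, hσs, hRN⟩
  by_cases hJ : BddBelow ((fun σ : Ω → ℝ => ∫ ω, φ ω * σ ω ∂μ) '' D)
  · refine le_antisymm (le_csInf (hD.image _) ?_) (le_of_forall_pos_lt_add fun ε hε => ?_)
    · rintro _ ⟨σ, hσ, rfl⟩
      exact integral_mul_le_of_ae_le hφ hφ0 hφM hσs (hDint σ hσ)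
        (h.ae_le_of_pos_of_bddBelow hφ hφ0 hφM hJ hσ)
    · obtain ⟨σ, hσ, hlt⟩ := h.exists_integral_mul_lt hφ hφ0 hφM hε
      exact (csInf_le hJ ⟨σ, hσ, rfl⟩).trans_lt hlt
  · have hσs0 : σs =ᵐ[μ] 0 :=
      h.ae_eq_zero_of_not_bddBelow fun hB => hJ (h.bddBelow_integral_mul hφ hφ0 hφM hB)
    rw [Real.sInf_of_not_bddBelow hJ]
    refine integral_eq_zero_of_ae ?_
    filter_upwards [hσs0] with ω hω
    simp [hω]

/-- Extension of the defining property of the essential infimum density: if `D` is a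
nonempty family of integrable functions closed under pointwise minima, and `σ*` is the
Radon–Nikodym density satisfying `∫_U σ* = inf{∫_U σ : σ ∈ D}` for all measurable `U`,
then for any measurable weight `φ` with values in `[0, M]`,
`∫ φ·σ* = inf{∫ φ·σ : σ ∈ D}`. -/
theorem essential_inf_extension
    {Ω : Type*} [MeasurableSpace Ω] (μ : Measure Ω) [IsProbabilityMeasure μ]
    (D : Set (Ω → ℝ)) (hD : D.Nonempty)
    (hDint : ∀ σ ∈ D, Integrable σ μ)
    (hDmin : ∀ σ₁ ∈ D, ∀ σ₂ ∈ D, (fun ω => min (σ₁ ω) (σ₂ ω)) ∈ D)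
    (σs : Ω → ℝ) (hσs : Integrable σs μ)
    (hRN : ∀ U : Set Ω, MeasurableSet U →
      (∫ ω in U, σs ω ∂μ) = sInf ((fun σ : Ω → ℝ => ∫ ω in U, σ ω ∂μ) '' D))
    (M : ℝ) (φ : Ω → ℝ) (hφ : Measurable φ)
    (hφ0 : ∀ ω, 0 ≤ φ ω) (hφM : ∀ ω, φ ω ≤ M) :
    (∫ ω, φ ω * σs ω ∂μ) = sInf ((fun σ : Ω → ℝ => ∫ ω, φ ω * σ ω ∂μ) '' D) :=
  essential_inf_extension_general μ D hD hDint hDmin σs hσs hRN M φ hφ hφ0 hφM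
end

section
/- Let F be a distribution with density f and virtual value φ(x) = x - (1 - F(x))/f(x). If F is ρ-concave for some ρ > -1 (i.e., φ'(x) ≥ 1 + ρ everywhere), then combining the bounds R ≥ (ρ+1)(W - R) (revenue vs. consumer surplus) and W* - W ≤ ((1+ρ)^{1/ρ} + (ρ+2)/(ρ+1))·R (deadweight loss), where R is the revenue and W, W* the welfare of the revenue-optimal and welfare-optimal single-bidder mechanisms respectively, one obtains W* ≤ (e+4)/2 · (ρ+2)/(ρ+1) · R, using the inequality (1+ρ)^{1/ρ} ≤ (e/2)·(ρ+2)/(ρ+1) for ρ > -1 (with (1+ρ)^{1/ρ} := e at ρ = 0). -/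
/-!
Taking logarithms, the elementary inequality `(1+ρ)^{1/ρ} ≤ (e/2)(ρ+2)/(ρ+1)` says that
`ρ ↦ ρ · log((e/2)(ρ+2)/(ρ+1)) - log(1+ρ)` has the sign of `ρ`. This function vanishes at `0`,
and its derivative `log((ρ+2)/(2(ρ+1))) + ρ/(ρ+2)` is nonnegative by `log u ≥ 1 - 1/u`, so it
is monotone on `(-1, ∞)`. The revenue bound is then linear arithmetic: `R ≥ (ρ+1)(W-R)` gives
`W ≤ ((ρ+2)/(ρ+1)) R`, which is added to the deadweight-loss bound.
-/

open Real Set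

namespace RhoConcave

noncomputable def logGap (x : ℝ) : ℝ :=
  x * (1 - log 2 + (log (x + 2) - log (x + 1))) - log (1 + x)

lemma log_exp_half_mul_div (x : ℝ) (hx : -1 < x) :
    log (exp 1 / 2 * ((x + 2) / (x + 1))) = 1 - log 2 + (log (x + 2) - log (x + 1)) := by
  rw [log_mul (by positivity) (div_pos (by linarith) (by linarith)).ne',
    log_div (exp_pos 1).ne' two_ne_zero, log_div (by linarith) (by linarith), log_exp]

lemma hasDerivAt_logGap (x : ℝ) (hx : -1 < x) :
    HasDerivAt logGap (log ((x + 2) / (2 * (x + 1))) + x / (x + 2)) x := by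
  have hx1 : x + 1 ≠ 0 := by linarith
  have hx2 : x + 2 ≠ 0 := by linarith
  have hlog2 : HasDerivAt (fun y => log (y + 2)) (1 / (x + 2)) x := by
    simpa using ((hasDerivAt_id x).add_const 2).log hx2
  have hlog1 : HasDerivAt (fun y => log (y + 1)) (1 / (x + 1)) x := by
    simpa using ((hasDerivAt_id x).add_const 1).log hx1
  have hlog1' : HasDerivAt (fun y => log (1 + y)) (1 / (x + 1)) x := by
    simpa [add_comm] using hlog1
  refine (((hasDerivAt_id' x).mul ((hlog2.sub hlog1).const_add (1 - log 2))).sub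
    hlog1').congr_deriv ?_
  rw [log_div hx2 (by positivity), log_mul two_ne_zero hx1, Pi.sub_apply]
  field_simp
  ring

lemma logGap_deriv_nonneg (x : ℝ) (hx : -1 < x) :
    0 ≤ log ((x + 2) / (2 * (x + 1))) + x / (x + 2) := by
  have hx1 : x + 1 ≠ 0 := by linarith
  have hx2 : x + 2 ≠ 0 := by linarith
  have hu : 0 < (x + 2) / (2 * (x + 1)) := div_pos (by linarith) (by linarith)
  have hinv : 1 - ((x + 2) / (2 * (x + 1)))⁻¹ = -(x / (x + 2)) := by
    field_simp
    ring
  linarith [one_sub_inv_le_log_of_pos hu]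

lemma monotoneOn_logGap : MonotoneOn logGap (Ioi (-1)) := by
  refine monotoneOn_of_hasDerivWithinAt_nonneg
    (f' := fun x => log ((x + 2) / (2 * (x + 1))) + x / (x + 2)) (convex_Ioi _)
    (fun x hx => (hasDerivAt_logGap x hx).continuousAt.continuousWithinAt)
    (fun x hx => ?_) (fun x hx => ?_)
  · rw [interior_Ioi] at hx ⊢
    exact (hasDerivAt_logGap x hx).hasDerivWithinAt
  · rw [interior_Ioi] at hx
    exact logGap_deriv_nonneg x hx

lemma log_one_add_div_le (ρ : ℝ) (hρ : -1 < ρ) (h0 : ρ ≠ 0) :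
    log (1 + ρ) / ρ ≤ log (exp 1 / 2 * ((ρ + 2) / (ρ + 1))) := by
  have hzero : logGap 0 = 0 := by simp [logGap]
  have hmem : (0 : ℝ) ∈ Ioi (-1) := by norm_num
  rw [log_exp_half_mul_div ρ hρ]
  rcases h0.lt_or_gt with hneg | hpos
  · have := monotoneOn_logGap hρ hmem hneg.le
    rw [hzero, logGap] at this
    rw [div_le_iff_of_neg hneg]
    linarith
  · have := monotoneOn_logGap hmem hρ hpos.le
    rw [hzero, logGap] at this
    rw [div_le_iff₀ hpos]
    linarith

open Classical in
lemma one_add_rpow_inv_le (ρ : ℝ) (hρ : -1 < ρ) :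
    (if ρ = 0 then exp 1 else (1 + ρ) ^ (1 / ρ)) ≤ exp 1 / 2 * ((ρ + 2) / (ρ + 1)) := by
  split_ifs with h0
  · subst h0
    norm_num
  · rw [rpow_def_of_pos (by linarith), mul_one_div,
      ← exp_log (mul_pos (half_pos (exp_pos 1)) (div_pos (by linarith) (by linarith)))]
    exact exp_le_exp.2 (log_one_add_div_le ρ hρ h0)

end RhoConcave

open Classical in
/-- ρ-concave revenue bound (algebraic combination): from `R ≥ (ρ+1)(W - R)` and the
deadweight-loss bound `W* - W ≤ ((1+ρ)^{1/ρ} + (ρ+2)/(ρ+1))·R`, using the elementary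
inequality `(1+ρ)^{1/ρ} ≤ (e/2)·(ρ+2)/(ρ+1)` for `ρ > -1` (with `(1+ρ)^{1/ρ} := e`
at `ρ = 0`), one obtains `W* ≤ ((e+4)/2)·((ρ+2)/(ρ+1))·R`. -/
theorem rho_concave_revenue_bound (ρ R W Wstar : ℝ) (hρ : -1 < ρ) (hR : 0 ≤ R)
    (h1 : (ρ + 1) * (W - R) ≤ R)
    (h2 : Wstar - W ≤
      ((if ρ = 0 then Real.exp 1 else (1 + ρ) ^ (1 / ρ)) + (ρ + 2) / (ρ + 1)) * R) :
    (if ρ = 0 then Real.exp 1 else (1 + ρ) ^ (1 / ρ)) ≤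
        (Real.exp 1 / 2) * ((ρ + 2) / (ρ + 1)) ∧
    Wstar ≤ (Real.exp 1 + 4) / 2 * ((ρ + 2) / (ρ + 1)) * R := by
  have hpow := RhoConcave.one_add_rpow_inv_le ρ hρ
  refine ⟨hpow, ?_⟩
  have hW : W ≤ (ρ + 2) / (ρ + 1) * R := by
    rw [div_mul_eq_mul_div, le_div_iff₀ (by linarith)]
    linarith
  have hdwl := mul_le_mul_of_nonneg_right (add_le_add_right hpow ((ρ + 2) / (ρ + 1))) hR
  linarith
end
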